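/- Under the hypotheses of the dependency-closed optimality proposition, an optimal set S* always exists (V is finite); moreover, if M ≥ Σ_{j∈V} (λcⱼ − rⱼ)₊, then for every S ⊆ V the dependency closure S̄ of S (the smallest superset of S closed under the edge relation) satisfies U(S̄) ≥ U(S). -/
import Mathlib


/-- A set is dependency-closed when every edge leaving a member lands inside. -/
def DepClosed {α : Type*} (E : Finset (α × α)) (S : Finset α) : Prop :=
  ∀ i j : α, i ∈ S → (i, j) ∈ E → j ∈ S

theorem stmt_2 {α : Type*} [Fintype α] [DecidableEq α]
    (E : Finset (α × α)) (r c : α → ℝ) (hc : ∀ i, 0 ≤ c i)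
    (lam M : ℝ) (hlam : lam > 0)
    (U : Finset α → ℝ)
    (hU : ∀ S : Finset α,
      U S = (∑ i ∈ S, r i) - lam * (∑ i ∈ S, c i)
            - M * ((E.filter (fun p => p.1 ∈ S ∧ p.2 ∉ S)).card)) :
    (∃ Sstar : Finset α, ∀ S : Finset α, U S ≤ U Sstar) ∧
    (M ≥ ∑ j : α, max (lam * c j - r j) 0 →
      ∀ S Sbar : Finset α,
        (S ⊆ Sbar ∧ DepClosed E Sbar ∧
          ∀ T : Finset α, S ⊆ T → DepClosed E T → Sbar ⊆ T) →
        U Sbar ≥ U S) := by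
  constructor
  · exact Finite.exists_max U
  · rintro hM S Sbar ⟨hSub, hClosed, hMin⟩
    by_cases hS : DepClosed E S
    · have h1 : Sbar ⊆ S := hMin S (Finset.Subset.refl S) hS
      have h2 : Sbar = S := Finset.Subset.antisymm h1 hSub
      rw [h2]
    · -- S violates at least one edge
      simp only [DepClosed, not_forall] at hS
      obtain ⟨i, j, hiS, hij, hjS⟩ := hS
      have hmem : (i, j) ∈ E.filter (fun p => p.1 ∈ S ∧ p.2 ∉ S) := by
        simp [Finset.mem_filter, hiS, hij, hjS]
      have hk1 : (1 : ℝ) ≤ ((E.filter (fun p => p.1 ∈ S ∧ p.2 ∉ S)).card : ℝ) := by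
        have := Finset.card_pos.mpr ⟨(i, j), hmem⟩
        exact_mod_cast this
      have hbarfilter : E.filter (fun p => p.1 ∈ Sbar ∧ p.2 ∉ Sbar) = ∅ := by
        apply Finset.filter_false_of_mem
        rintro ⟨a, b⟩ hab ⟨ha, hb⟩
        exact hb (hClosed a b ha hab)
      have hMnn : 0 ≤ ∑ j : α, max (lam * c j - r j) 0 :=
        Finset.sum_nonneg fun j _ => le_max_right _ _
      have hM0 : 0 ≤ M := le_trans hMnn hM
      rw [hU S, hU Sbar, hbarfilter]
      simp only [Finset.card_empty, Nat.cast_zero, mul_zero, sub_zero]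
      have hsplit_r : ∑ x ∈ Sbar, r x = (∑ x ∈ Sbar \ S, r x) + ∑ x ∈ S, r x :=
        (Finset.sum_sdiff hSub).symm
      have hsplit_c : ∑ x ∈ Sbar, c x = (∑ x ∈ Sbar \ S, c x) + ∑ x ∈ S, c x :=
        (Finset.sum_sdiff hSub).symm
      rw [hsplit_r, hsplit_c]
      have key : -(M * ((E.filter (fun p => p.1 ∈ S ∧ p.2 ∉ S)).card : ℝ)) ≤
          (∑ x ∈ Sbar \ S, r x) - lam * ∑ x ∈ Sbar \ S, c x := by
        have h1 : -(∑ x ∈ Sbar \ S, max (lam * c x - r x) 0) ≤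
            (∑ x ∈ Sbar \ S, r x) - lam * ∑ x ∈ Sbar \ S, c x := by
          rw [Finset.mul_sum, ← Finset.sum_sub_distrib, ← Finset.sum_neg_distrib]
          apply Finset.sum_le_sum
          intro x _
          have := le_max_left (lam * c x - r x) 0
          linarith
        have h2 : (∑ x ∈ Sbar \ S, max (lam * c x - r x) 0) ≤
            ∑ j : α, max (lam * c j - r j) 0 := by
          apply Finset.sum_le_sum_of_subset_of_nonneg (Finset.subset_univ _)
          intro j _ _
          exact le_max_right _ _
        have h3 : M ≤ M * ((E.filter (fun p => p.1 ∈ S ∧ p.2 ∉ S)).card : ℝ) := by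
          nlinarith
        linarith
      linarith
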